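/- Let ℓ ≥ 0 and r ≥ 1 and let X^r(ℓ^r) = X^{r-1+ℓ} ∧ X^{r-2+ℓ} ∧ ⋯ ∧ X^ℓ ∈ ⋀^r ℚ[X]. Let σ̄₊(z) be the Hasse–Schmidt derivation on ⋀ℚ[X] with σ̄₊(z)X^j = X^j − zX^{j+1}. Then σ̄₊(z)X^r(ℓ^r) = X^r(ℓ^r) + ∑_{i=1}^r (−1)^i z^i X^r((ℓ+1)^i ℓ^{r−i}), where (ℓ+1)^i ℓ^{r−i} denotes the partition with i parts equal to ℓ+1 followed by r−i parts equal to ℓ. -/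
import Mathlib


noncomputable section

/-- The scalar ring `ℚ[z]`. -/
abbrev R : Type := Polynomial ℚ

/-- `V = R[X]`, free `R`-module with basis `(X^j)`. -/
abbrev VR : Type := ℕ →₀ R

/-- The linear map `X^j ↦ X^j − z X^{j+1}`. -/
def sbarL : VR →ₗ[R] VR :=
  Finsupp.lift VR R ℕ
    (fun j => Finsupp.single j 1 - (Polynomial.X : R) • Finsupp.single (j + 1) 1)

/-- The Hasse–Schmidt derivation `σ̄₊(z)`: the algebra endomorphism of `⋀V` induced by
`X^j ↦ X^j − z X^{j+1}` (multiplicative on wedge products). -/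
def sbarA : ExteriorAlgebra R VR →ₐ[R] ExteriorAlgebra R VR :=
  ExteriorAlgebra.map sbarL

def Xp (j : ℕ) : ExteriorAlgebra R VR := ExteriorAlgebra.ι R (Finsupp.single j 1)

/-- `X^r((ℓ+1)^i ℓ^{r-i}) = X^{r-1+ℓ+1}∧⋯∧X^{ℓ+1}∧X^{r-1-i+ℓ}∧⋯∧X^ℓ`: the wedge whose
`k`-th factor (k = 0,…,r−1) is `X^{r-1-k+ℓ+1}` for `k < i` and `X^{r-1-k+ℓ}` otherwise. -/
def Wl (r ℓ i : ℕ) : ExteriorAlgebra R VR :=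
  ((List.range r).map fun k => Xp (r - 1 - k + if k < i then ℓ + 1 else ℓ)).prod

set_option synthInstance.maxHeartbeats 400000
set_option maxHeartbeats 800000

lemma sbarA_Xp (j : ℕ) : sbarA (Xp j) = Xp j - (Polynomial.X : R) • Xp (j+1) := by
  unfold sbarA Xp
  rw [ExteriorAlgebra.map_apply_ι]
  simp only [sbarL, Finsupp.lift_apply, Finsupp.sum_single_index, zero_smul, one_smul,
    Finsupp.smul_single, smul_eq_mul, mul_one, map_sub]
  rw [← map_smul, Finsupp.smul_single, smul_eq_mul, mul_one]

lemma Wl_succ (r ℓ i : ℕ) :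
    Wl (r+1) ℓ i = Xp (r + if 0 < i then ℓ+1 else ℓ) * Wl r ℓ (i-1) := by
  unfold Wl
  rw [List.range_succ_eq_map, List.map_cons, List.prod_cons, List.map_map]
  have h : (List.map ((fun k => Xp (r + 1 - 1 - k + if k < i then ℓ+1 else ℓ)) ∘ Nat.succ)
      (List.range r)) = List.map (fun k => Xp (r - 1 - k + if k < i - 1 then ℓ+1 else ℓ))
      (List.range r) := by
    refine List.map_congr_left fun k _ => ?_
    simp only [Function.comp, Nat.succ_eq_add_one]
    congr 1
    split_ifs <;> omega
  rw [h]
  norm_num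

lemma Xp_sq (j : ℕ) : Xp j * Xp j = 0 := ExteriorAlgebra.ι_sq_zero _

lemma Xp_mul_Wl (r ℓ i : ℕ) (hr : 1 ≤ r) (hi : 1 ≤ i) : Xp (r + ℓ) * Wl r ℓ i = 0 := by
  obtain ⟨s, rfl⟩ : ∃ s, r = s + 1 := ⟨r - 1, by omega⟩
  rw [Wl_succ, if_pos (by omega), ← mul_assoc,
    show s + 1 + ℓ = s + (ℓ + 1) by omega, Xp_sq, zero_mul]

lemma key (ℓ : ℕ) : ∀ r, sbarA (Wl r ℓ 0) =
    ∑ i ∈ Finset.range (r+1), (((-1 : R) ^ i * (Polynomial.X : R) ^ i) • Wl r ℓ i)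
  | 0 => by simp [Wl]
  | (r+1) => by
    have hW0 : Wl (r+1) ℓ 0 = Xp (r + ℓ) * Wl r ℓ 0 := by
      rw [Wl_succ, if_neg (by omega)]
    have hWs : ∀ i : ℕ, Xp (r + ℓ + 1) * Wl r ℓ i = Wl (r+1) ℓ (i+1) := fun i => by
      rw [Wl_succ, if_pos (by omega), show r + (ℓ + 1) = r + ℓ + 1 by omega, Nat.add_sub_cancel]
    rw [hW0, map_mul, sbarA_Xp, key ℓ r, sub_mul, Finset.mul_sum, Finset.mul_sum]
    simp only [smul_mul_assoc, mul_smul_comm, smul_smul, hWs]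
    rw [Finset.sum_range_succ' (n := r+1), Finset.sum_range_succ'
      (f := fun i => ((-1 : R) ^ i * (Polynomial.X : R) ^ i) • (Xp (r + ℓ) * Wl r ℓ i))]
    rw [Finset.sum_eq_zero (fun i hi => by
      rw [Xp_mul_Wl r ℓ (i+1) (by simp at hi; omega) (by omega), smul_zero])]
    rw [zero_add, sub_eq_add_neg, ← Finset.sum_neg_distrib]
    rw [show ((-1 : R) ^ 0 * (Polynomial.X : R) ^ 0) • (Xp (r + ℓ) * Wl r ℓ 0)
      = ((-1 : R) ^ 0 * (Polynomial.X : R) ^ 0) • Wl (r+1) ℓ 0 from by rw [hW0]]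
    rw [add_comm]
    congr 1
    refine Finset.sum_congr rfl fun i _ => ?_
    rw [← neg_smul]
    congr 1
    ring

/-- `σ̄₊(z)X^r(ℓ^r) = X^r(ℓ^r) + ∑_{i=1}^r (−1)^i z^i X^r((ℓ+1)^i ℓ^{r−i})`. -/
theorem sbar_const_partition (r ℓ : ℕ) (hr : 1 ≤ r) :
    sbarA (Wl r ℓ 0) =
      Wl r ℓ 0 + ∑ i ∈ Finset.Icc 1 r,
        (((-1 : R) ^ i * (Polynomial.X : R) ^ i) • Wl r ℓ i) := by
  rw [key, Finset.sum_range_succ', pow_zero, pow_zero, one_mul, one_smul, add_comm]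
  congr 1
  rw [show Finset.Icc 1 r = Finset.Ico 1 (r+1) from by rw [Finset.Ico_add_one_right_eq_Icc],
    Finset.sum_Ico_eq_sum_range, Nat.add_sub_cancel]
  simp [add_comm 1]
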